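/- For all t > 0, h(t) := t²·log(t+1) − t³ + 2·((t+1)·log(t+1) − t)² < 0. -/

import Mathlib

/-!
Dividing by `-t²`, the claim is `0 < K t` for
`K s = s - log (s + 1) - 2 (((s + 1) log (s + 1) - s) / s)²`. Near `0⁺`, `K` is squeezed between
`-2 s²` and `s`, so it tends to `0`, and it is strictly increasing on `(0, ∞)`: with
`L = log (s + 1)` and `B = (s + 1) L - s`, the sign of `K'` is that of
`s⁴ - 4 (s + 1) B (s - L) = (s + 1) (2 B - s L)² + s² (s² - (s + 1) L²)`, and the last factor is
positive because `log x < (x - 1) / √x` for `x > 1`, which is `u < sinh u` at `u = log x / 2`.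
-/

open Real Set Filter Topology

theorem StrictMonoOn.lt_of_tendsto_nhdsGT {α β : Type*} [LinearOrder α] [TopologicalSpace α]
    [OrderTopology α] [DenselyOrdered α] [LinearOrder β] [TopologicalSpace β]
    [ClosedIicTopology β] {f : α → β} {a x : α} {c : β} (hf : StrictMonoOn f (Ioi a))
    (hlim : Tendsto f (𝓝[>] a) (𝓝 c)) (hx : a < x) : c < f x := by
  obtain ⟨y, hay, hyx⟩ := exists_between hx
  have : (𝓝[>] a).NeBot := nhdsGT_neBot_of_exists_gt ⟨x, hx⟩
  have hcy : c ≤ f y := le_of_tendsto hlim <| mem_of_superset (Ioo_mem_nhdsGT hay)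
    fun s hs => (hf.le_iff_le hs.1 hay).2 hs.2.le
  exact hcy.trans_lt (hf hay (hay.trans hyx) hyx)

theorem sq_log_mul_lt_sq_sub_one {x : ℝ} (hx : 1 < x) : log x ^ 2 * x < (x - 1) ^ 2 := by
  set u := log x / 2
  have hu : 0 < u := by have := log_pos hx; positivity
  have hexp : exp u ^ 2 = x := by
    rw [← exp_nat_mul, show ((2 : ℕ) : ℝ) * u = log x by simp [u]; ring, exp_log (by linarith)]
  have hsinh : 2 * sinh u * exp u = x - 1 := by
    rw [sinh_eq, ← hexp]
    field_simp
    rw [mul_sub, ← exp_add u (-u), add_neg_cancel, exp_zero]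
    ring
  have hlt : log x * exp u < x - 1 := by
    rw [← hsinh, show log x = 2 * u by simp [u]; ring]
    nlinarith [self_lt_sinh_iff.2 hu, exp_pos u]
  calc log x ^ 2 * x = (log x * exp u) ^ 2 := by rw [mul_pow, hexp]
    _ < (x - 1) ^ 2 := pow_lt_pow_left₀ hlt (by have := log_pos hx; positivity) two_ne_zero

theorem four_mul_mul_mul_lt_pow_four {s L : ℝ} (hs : 0 ≤ s + 1) (hL : L ^ 2 * (s + 1) < s ^ 2) :
    4 * ((s + 1) * L - s) * (s + 1) * (s - L) < s ^ 4 := by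
  have hs2 : 0 < s ^ 2 := by nlinarith
  nlinarith [mul_nonneg hs (sq_nonneg (2 * ((s + 1) * L - s) - s * L)),
    mul_pos hs2 (sub_pos.2 hL)]

/-- The function `K` above. -/
noncomputable def scaledDefect (s : ℝ) : ℝ :=
  s - log (s + 1) - 2 * (((s + 1) * log (s + 1) - s) / s) ^ 2

theorem hasDerivAt_log_add_one {s : ℝ} (hs : 0 < s + 1) :
    HasDerivAt (fun s => log (s + 1)) (1 / (s + 1)) s :=
  ((hasDerivAt_id s).add_const 1).log hs.ne'

theorem hasDerivAt_mul_log_sub_div {s : ℝ} (hs : 0 < s) :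
    HasDerivAt (fun s => ((s + 1) * log (s + 1) - s) / s) ((s - log (s + 1)) / s ^ 2) s := by
  have hs1 : 0 < s + 1 := by linarith
  have hB := (((hasDerivAt_id' s).add_const 1).mul (hasDerivAt_log_add_one hs1)).sub
    (hasDerivAt_id' s)
  refine (hB.div (hasDerivAt_id' s) hs.ne').congr_deriv ?_
  simp only [Pi.sub_apply, Pi.mul_apply]
  field_simp
  ring

theorem hasDerivAt_scaledDefect {s : ℝ} (hs : 0 < s) :
    HasDerivAt scaledDefect
      (s / (s + 1) - 4 * ((s + 1) * log (s + 1) - s) * (s - log (s + 1)) / s ^ 3) s := by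
  have hs1 : 0 < s + 1 := by linarith
  refine (((hasDerivAt_id' s).sub (hasDerivAt_log_add_one hs1)).sub
    (((hasDerivAt_mul_log_sub_div hs).pow 2).const_mul 2)).congr_deriv ?_
  have := hs.ne'
  simp only [Nat.cast_ofNat, Nat.add_one_sub_one, pow_one]
  field_simp
  ring

theorem strictMonoOn_scaledDefect : StrictMonoOn scaledDefect (Ioi 0) := by
  refine strictMonoOn_of_deriv_pos (convex_Ioi 0)
    (fun s hs => (hasDerivAt_scaledDefect hs).continuousAt.continuousWithinAt) fun s hs => ?_
  rw [interior_Ioi, mem_Ioi] at hs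
  rw [(hasDerivAt_scaledDefect hs).deriv, sub_pos, div_lt_div_iff₀ (by positivity) (by positivity)]
  have hlog := sq_log_mul_lt_sq_sub_one (show 1 < s + 1 by linarith)
  rw [add_sub_cancel_right] at hlog
  have := four_mul_mul_mul_lt_pow_four (by linarith) hlog
  nlinarith

theorem scaledDefect_le_self {s : ℝ} (hs : 0 < s) : scaledDefect s ≤ s := by
  have := log_nonneg (show 1 ≤ s + 1 by linarith)
  unfold scaledDefect
  nlinarith [sq_nonneg (((s + 1) * log (s + 1) - s) / s)]

theorem neg_two_mul_sq_le_scaledDefect {s : ℝ} (hs : 0 < s) : -(2 * s ^ 2) ≤ scaledDefect s := by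
  have hs1 : 0 < s + 1 := by linarith
  have hLs : log (s + 1) ≤ s := by linarith [log_le_sub_one_of_pos hs1]
  have hB0 : s ≤ (s + 1) * log (s + 1) := by
    have h := mul_le_mul_of_nonneg_left (one_sub_inv_le_log_of_pos hs1) hs1.le
    rwa [mul_sub, mul_one, mul_inv_cancel₀ hs1.ne', add_sub_cancel_right] at h
  have hq : ((s + 1) * log (s + 1) - s) / s ≤ s := by
    rw [div_le_iff₀ hs]; nlinarith
  have hq0 : 0 ≤ ((s + 1) * log (s + 1) - s) / s := div_nonneg (by linarith) hs.le
  unfold scaledDefect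
  nlinarith

theorem tendsto_scaledDefect_nhdsGT_zero : Tendsto scaledDefect (𝓝[>] 0) (𝓝 0) := by
  have hid : Tendsto (fun s : ℝ => s) (𝓝[>] 0) (𝓝 0) :=
    tendsto_nhdsWithin_of_tendsto_nhds tendsto_id
  refine tendsto_of_tendsto_of_tendsto_of_le_of_le' ?_ hid
    (eventually_nhdsWithin_of_forall fun s hs => neg_two_mul_sq_le_scaledDefect hs)
    (eventually_nhdsWithin_of_forall fun s hs => scaledDefect_le_self hs)
  simpa using (hid.pow 2).const_mul 2 |>.neg

theorem stmt_6 (t : ℝ) (ht : 0 < t) :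
    t^2 * Real.log (t + 1) - t^3 + 2 * ((t + 1) * Real.log (t + 1) - t)^2 < 0 := by
  have hK : 0 < scaledDefect t :=
    strictMonoOn_scaledDefect.lt_of_tendsto_nhdsGT tendsto_scaledDefect_nhdsGT_zero ht
  have hh : t^2 * Real.log (t + 1) - t^3 + 2 * ((t + 1) * Real.log (t + 1) - t)^2
      = -(t ^ 2 * scaledDefect t) := by
    unfold scaledDefect
    field_simp
    ring
  rw [hh, neg_neg_iff_pos]
  positivity
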